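/- arXiv:1107.0124 — 3 statements merged into one kernel-verified Lean document; each statement's English description precedes it below -/
import Mathlib

section
/- Let d ≥ 1, let I be a metric space, let S : I → Matrix d d ℂ be continuous, and let Λ ⊆ Σ_I^+ be a nonempty compact θ_+-invariant subset. Then S is Λ-absolutely asymptotically stable (i.e. S_{i_n}···S_{i_1} → 0 as n → ∞ for every i(·) ∈ Λ) if and only if both of the following hold: (1) there exists β > 0 such that ‖S_{i_ℓ}···S_{i_1}‖ ≤ β for all ℓ ≥ 1 and all i(·) ∈ Λ; and (2) there exist γ ∈ (0,1) and an integer N ≥ 1 such that ρ(S_{i_ℓ}···S_{i_1}) ≤ γ for all ℓ ≥ N and all i(·) ∈ Λ. -/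
open Filter Topology MeasureTheory

/-- Operator norm on `d × d` complex matrices induced by the Euclidean norm on `ℂ^d`. -/
noncomputable def opNorm {d : ℕ} (A : Matrix (Fin d) (Fin d) ℂ) : ℝ :=
  ‖Matrix.toEuclideanCLM (𝕜 := ℂ) A‖

/-- Spectral radius of a complex matrix, as a real number. -/
noncomputable def specRad {d : ℕ} (A : Matrix (Fin d) (Fin d) ℂ) : ℝ :=
  (spectralRadius ℂ A).toReal

/-- `prodS S x n = S_{i_n} ⋯ S_{i_1}` where `i_k = x (k-1)`. -/
noncomputable def prodS {d : ℕ} {I : Type*} (S : I → Matrix (Fin d) (Fin d) ℂ)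
    (x : ℕ → I) : ℕ → Matrix (Fin d) (Fin d) ℂ
  | 0 => 1
  | n + 1 => S (x n) * prodS S x n

/-- `Λ` is invariant under the one-sided shift `θ₊`. -/
def ShiftInv {I : Type*} (Λ : Set (ℕ → I)) : Prop :=
  ∀ x ∈ Λ, (fun n => x (n + 1)) ∈ Λ

/-!
If every product along `Λ` tends to `0`, each signal reaches a product of norm `< 1/2`; since
products depend continuously on the signal and `Λ` is compact, the number of steps needed is
uniform, and shift-invariance lets this contraction be iterated, which gives uniform exponential
decay. Both bounds follow, the spectral radius being at most the norm.

Conversely, let `A` be a limit point of the bounded products `P_n(x)`. Pairing each time `n`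
with a time `n' ≥ n + N` writes `P_{n'}(x) = Q P_n(x)` with `Q` a block product of length `≥ N`,
so all eigenvalues of `Q` lie in the disc of radius `γ` and `|det (1 - Q)| ≥ (1 - γ)^d`. This
bound passes to a limit `Q` of such blocks, which satisfies `A = Q A` with `1 - Q` invertible;
hence `A = 0`.
-/

-- With this norm `‖A‖` is `opNorm A` by definition, and its topology is the entrywise one.
open scoped NNReal ENNReal Matrix.Norms.L2Operator

section TopologicalRing

variable {R : Type*} [Ring R] [TopologicalSpace R] [IsTopologicalRing R] [FirstCountableTopology R]
  [T2Space R]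

theorem eq_zero_of_tendsto_of_forall_eq_mul {T : ℕ → R} {K : Set R} (hK : IsCompact K)
    (hunit : ∀ Q ∈ K, IsUnit (1 - Q)) {N : ℕ} (hT : ∀ m n, m + N ≤ n → ∃ Q ∈ K, T n = Q * T m)
    {u : ℕ → ℕ} (hu : Tendsto u atTop atTop) {A : R} (hA : Tendsto (T ∘ u) atTop (𝓝 A)) :
    A = 0 := by
  have hlater : ∀ k, ∃ j, k ≤ j ∧ u k + N ≤ u j := fun k =>
    ((eventually_ge_atTop k).and (hu.eventually_ge_atTop (u k + N))).exists
  choose σ hσ hσN using hlater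
  choose Q hQK hQ using fun k => hT (u k) (u (σ k)) (hσN k)
  obtain ⟨B, hBK, φ, hφ, hQB⟩ := hK.tendsto_subseq hQK
  have hσφ : Tendsto (σ ∘ φ) atTop atTop :=
    tendsto_atTop_mono (fun j => hσ (φ j)) hφ.tendsto_atTop
  have hBA : A = B * A := by
    refine tendsto_nhds_unique (hA.comp hσφ) ?_
    simpa only [Function.comp_def, hQ] using hQB.mul (hA.comp hφ.tendsto_atTop)
  rw [← (hunit B hBK).mul_right_eq_zero, sub_mul, one_mul, ← hBA, sub_self]

theorem tendsto_zero_of_forall_eq_mul {T : ℕ → R} {L K : Set R} (hL : IsCompact L)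
    (hTL : ∀ᶠ n in atTop, T n ∈ L) (hK : IsCompact K) (hunit : ∀ Q ∈ K, IsUnit (1 - Q)) {N : ℕ}
    (hT : ∀ m n, m + N ≤ n → ∃ Q ∈ K, T n = Q * T m) : Tendsto T atTop (𝓝 0) := by
  refine tendsto_of_subseq_tendsto fun u hu => ?_
  obtain ⟨A, -, φ, hφ, hA⟩ := hL.tendsto_subseq' (hu.eventually hTL).frequently
  refine ⟨φ, ?_⟩
  rwa [eq_zero_of_tendsto_of_forall_eq_mul hK hunit hT (hu.comp hφ.tendsto_atTop) hA] at hA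

end TopologicalRing

theorem pow_card_le_norm_det_one_sub {𝕜 n : Type*} [NormedField 𝕜] [IsAlgClosed 𝕜] [Fintype n]
    [DecidableEq n] {γ : ℝ} (hγ : γ ≤ 1) {A : Matrix n n 𝕜} (hA : ∀ z ∈ spectrum 𝕜 A, ‖z‖ ≤ γ) :
    (1 - γ) ^ Fintype.card n ≤ ‖(1 - A).det‖ := by
  have hsplit := IsAlgClosed.splits A.charpoly
  have hdet : (1 - A).det = (A.charpoly.roots.map (1 - ·)).prod := by
    rw [← hsplit.eval_eq_prod_roots_of_monic A.charpoly_monic, Matrix.eval_charpoly,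
      Matrix.scalar_apply, Matrix.diagonal_one]
  have hcard : Multiset.card A.charpoly.roots = Fintype.card n := by
    rw [← hsplit.natDegree_eq_card_roots, Matrix.charpoly_natDegree_eq_dim]
  have hroot : ∀ z ∈ A.charpoly.roots, 1 - γ ≤ ‖1 - z‖ := fun z hz => by
    have hz' : z ∈ spectrum 𝕜 A :=
      Matrix.mem_spectrum_iff_isRoot_charpoly.2 (Polynomial.isRoot_of_mem_roots hz)
    have htri : 1 - ‖z‖ ≤ ‖1 - z‖ := by simpa using norm_sub_norm_le (1 : 𝕜) z
    linarith [hA z hz']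
  calc (1 - γ) ^ Fintype.card n = (A.charpoly.roots.map fun _ => 1 - γ).prod := by
        rw [Multiset.map_const', Multiset.prod_replicate, hcard]
    _ ≤ (A.charpoly.roots.map fun z => ‖1 - z‖).prod :=
        Multiset.prod_map_le_prod_map₀ _ _ (fun _ _ => sub_nonneg.2 hγ) hroot
    _ = ‖(1 - A).det‖ := by
        rw [hdet, ← normHom_apply, map_multiset_prod, Multiset.map_map]; rfl

section SpectralRadius

variable {d : ℕ}

theorem Matrix.spectralRadius_le_nnnorm (A : Matrix (Fin d) (Fin d) ℂ) :
    spectralRadius ℂ A ≤ ‖A‖₊ := by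
  rcases isEmpty_or_nonempty (Fin d) with _ | _
  · simp
  · exact spectrum.spectralRadius_le_nnnorm A

theorem specRad_le_norm (A : Matrix (Fin d) (Fin d) ℂ) : specRad A ≤ ‖A‖ := by
  simpa [specRad] using ENNReal.toReal_mono ENNReal.coe_ne_top A.spectralRadius_le_nnnorm

theorem norm_le_of_mem_spectrum_of_specRad_le {A : Matrix (Fin d) (Fin d) ℂ} {γ : ℝ}
    (hA : specRad A ≤ γ) {z : ℂ} (hz : z ∈ spectrum ℂ A) : ‖z‖ ≤ γ := by
  have hz_le : (‖z‖₊ : ℝ≥0∞) ≤ spectralRadius ℂ A :=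
    le_iSup₂ (f := fun k (_ : k ∈ spectrum ℂ A) => (‖k‖₊ : ℝ≥0∞)) z hz
  have hfinite := ne_top_of_le_ne_top ENNReal.coe_ne_top A.spectralRadius_le_nnnorm
  simpa [specRad] using (ENNReal.toReal_mono hfinite hz_le).trans hA

end SpectralRadius

section Signal

variable {d : ℕ} {I : Type*} {S : I → Matrix (Fin d) (Fin d) ℂ} {Λ : Set (ℕ → I)}

theorem prodS_add (S : I → Matrix (Fin d) (Fin d) ℂ) (x : ℕ → I) (a b : ℕ) :
    prodS S x (a + b) = prodS S (fun n => x (n + a)) b * prodS S x a := by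
  induction b with
  | zero => simp [prodS]
  | succ b ih => rw [← add_assoc, prodS, prodS, ih, add_comm a b, mul_assoc]

theorem ShiftInv.comp_add_mem (hinv : ShiftInv Λ) {x : ℕ → I} (hx : x ∈ Λ) (a : ℕ) :
    (fun n => x (n + a)) ∈ Λ := by
  induction a with
  | zero => exact hx
  | succ a ih => simpa only [add_assoc, add_comm 1 a] using hinv _ ih

theorem continuous_prodS [TopologicalSpace I] (hS : Continuous S) (n : ℕ) :
    Continuous fun x : ℕ → I => prodS S x n := by
  induction n with
  | zero => exact continuous_const
  | succ n ih => exact (hS.comp (continuous_apply n)).matrix_mul ih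

theorem exists_norm_prodS_le [TopologicalSpace I] (hS : Continuous S) (hcomp : IsCompact Λ)
    (N : ℕ) : ∃ C > 0, ∀ m < N, ∀ x ∈ Λ, ‖prodS S x m‖ ≤ C := by
  obtain ⟨C, hC, hbound⟩ := ((Set.finite_lt_nat N).isCompact_biUnion fun m _ =>
    hcomp.image (continuous_prodS hS m)).isBounded.exists_pos_norm_le
  exact ⟨C, hC, fun m hm x hx => hbound _ (Set.mem_iUnion₂.2 ⟨m, hm, Set.mem_image_of_mem _ hx⟩)⟩

theorem exists_uniform_norm_prodS_lt [TopologicalSpace I] (hS : Continuous S)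
    (hcomp : IsCompact Λ) (hstab : ∀ x ∈ Λ, Tendsto (prodS S x) atTop (𝓝 0)) {c : ℝ}
    (hc : 0 < c) : ∃ N, ∀ x ∈ Λ, ∃ m, 0 < m ∧ m < N ∧ ‖prodS S x m‖ < c := by
  have hcover : Λ ⊆ ⋃ m, {x | ‖prodS S x (m + 1)‖ < c} := fun x hx => by
    have hsmall := (tendsto_zero_iff_norm_tendsto_zero.1 (hstab x hx)).eventually (gt_mem_nhds hc)
    exact Set.mem_iUnion.2 ((tendsto_add_atTop_nat 1).eventually hsmall).exists
  obtain ⟨t, ht⟩ := hcomp.elim_finite_subcover _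
    (fun m => isOpen_lt (continuous_prodS hS _).norm continuous_const) hcover
  refine ⟨t.sup id + 2, fun x hx => ?_⟩
  obtain ⟨m, hmt, hm⟩ := Set.mem_iUnion₂.1 (ht hx)
  have hm_le : m ≤ t.sup id := Finset.le_sup (f := id) hmt
  exact ⟨m + 1, m.succ_pos, by omega, hm⟩

theorem norm_prodS_le_mul_pow_div (hinv : ShiftInv Λ) {N : ℕ} {C c : ℝ} (hC : 0 ≤ C)
    (hc : 0 ≤ c) (hc1 : c ≤ 1) (hshort : ∀ m < N, ∀ x ∈ Λ, ‖prodS S x m‖ ≤ C)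
    (hcontr : ∀ x ∈ Λ, ∃ m, 0 < m ∧ m < N ∧ ‖prodS S x m‖ ≤ c) (ℓ : ℕ) :
    ∀ x ∈ Λ, ‖prodS S x ℓ‖ ≤ C * c ^ (ℓ / N) := by
  induction ℓ using Nat.strong_induction_on with
  | _ ℓ ih =>
  intro x hx
  rcases lt_or_ge ℓ N with hℓ | hℓ
  · simpa [Nat.div_eq_of_lt hℓ] using hshort ℓ hℓ x hx
  obtain ⟨m, hm0, hmN, hm⟩ := hcontr x hx
  obtain ⟨k, rfl⟩ := Nat.exists_eq_add_of_le (hmN.le.trans hℓ)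
  have hdiv : (m + k) / N ≤ k / N + 1 :=
    calc (m + k) / N ≤ (k + N) / N := Nat.div_le_div_right (by omega)
      _ = k / N + 1 := Nat.add_div_right k (by omega)
  calc ‖prodS S x (m + k)‖ ≤ ‖prodS S (fun n => x (n + m)) k‖ * ‖prodS S x m‖ := by
        rw [prodS_add]; exact norm_mul_le _ _
    _ ≤ C * c ^ (k / N) * c :=
        mul_le_mul (ih k (by omega) _ (hinv.comp_add_mem hx m)) hm (norm_nonneg _) (by positivity)
    _ = C * c ^ (k / N + 1) := by ring
    _ ≤ C * c ^ ((m + k) / N) := mul_le_mul_of_nonneg_left (pow_le_pow_of_le_one hc hc1 hdiv) hC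

theorem exists_norm_prodS_le_mul_half_pow [TopologicalSpace I] (hS : Continuous S)
    (hcomp : IsCompact Λ) (hinv : ShiftInv Λ)
    (hstab : ∀ x ∈ Λ, Tendsto (prodS S x) atTop (𝓝 0)) :
    ∃ C > 0, ∃ N > 0, ∀ ℓ, ∀ x ∈ Λ, ‖prodS S x ℓ‖ ≤ C * (1 / 2) ^ (ℓ / N) := by
  obtain ⟨N, hN⟩ := exists_uniform_norm_prodS_lt hS hcomp hstab (by norm_num : (0 : ℝ) < 1 / 2)
  obtain ⟨C, hC, hshort⟩ := exists_norm_prodS_le hS hcomp (N + 1)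
  refine ⟨C, hC, N + 1, N.succ_pos,
    norm_prodS_le_mul_pow_div hinv hC.le (by norm_num) (by norm_num) hshort fun x hx => ?_⟩
  obtain ⟨m, hm0, hmN, hm⟩ := hN x hx
  exact ⟨m, hm0, hmN.trans N.lt_succ_self, hm.le⟩

theorem tendsto_prodS_zero_of_norm_le_of_specRad_le (hinv : ShiftInv Λ) {β γ : ℝ} (hγ : γ < 1)
    {N : ℕ} (hN : 1 ≤ N) (hβ : ∀ ℓ, 1 ≤ ℓ → ∀ x ∈ Λ, ‖prodS S x ℓ‖ ≤ β)
    (hρ : ∀ ℓ, N ≤ ℓ → ∀ x ∈ Λ, specRad (prodS S x ℓ) ≤ γ) {x : ℕ → I} (hx : x ∈ Λ) :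
    Tendsto (prodS S x) atTop (𝓝 0) := by
  set K := Metric.closedBall 0 β ∩
    {B : Matrix (Fin d) (Fin d) ℂ | (1 - γ) ^ Fintype.card (Fin d) ≤ ‖(1 - B).det‖}
  have hK : IsCompact K := (isCompact_closedBall 0 β).inter_right <|
    isClosed_le continuous_const (continuous_const.sub continuous_id).matrix_det.norm
  have hunit : ∀ Q ∈ K, IsUnit (1 - Q) := fun Q hQ =>
    (Matrix.isUnit_iff_isUnit_det _).2 <| isUnit_iff_ne_zero.2 <|
      norm_pos_iff.1 <| (pow_pos (sub_pos.2 hγ) _).trans_le hQ.2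
  refine tendsto_zero_of_forall_eq_mul (isCompact_closedBall 0 β) ?_ hK hunit (N := N)
    fun m n hmn => ?_
  · filter_upwards [eventually_ge_atTop 1] with n hn
    exact mem_closedBall_zero_iff.2 (hβ n hn x hx)
  · obtain ⟨k, rfl⟩ := Nat.exists_eq_add_of_le hmn
    have hy := hinv.comp_add_mem hx m
    refine ⟨prodS S (fun j => x (j + m)) (N + k), ⟨?_, ?_⟩, by rw [add_assoc, prodS_add]⟩
    · exact mem_closedBall_zero_iff.2 (hβ _ (by omega) _ hy)
    · exact pow_card_le_norm_det_one_sub hγ.le fun z hz =>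
        norm_le_of_mem_spectrum_of_specRad_le (hρ _ (by omega) _ hy) hz

end Signal

theorem abs_asymp_stable_iff_bounded_and_specRad_general {d : ℕ} {I : Type*}
    [MetricSpace I] (S : I → Matrix (Fin d) (Fin d) ℂ) (hS : Continuous S)
    (Λ : Set (ℕ → I)) (hcomp : IsCompact Λ) (hinv : ShiftInv Λ) :
    (∀ x ∈ Λ, Filter.Tendsto (fun n : ℕ => prodS S x n) Filter.atTop (nhds 0)) ↔
      ((∃ β : ℝ, 0 < β ∧ ∀ ℓ : ℕ, 1 ≤ ℓ → ∀ x ∈ Λ, opNorm (prodS S x ℓ) ≤ β) ∧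
        ∃ γ : ℝ, 0 < γ ∧ γ < 1 ∧ ∃ N : ℕ, 1 ≤ N ∧
          ∀ ℓ : ℕ, N ≤ ℓ → ∀ x ∈ Λ, specRad (prodS S x ℓ) ≤ γ) := by
  constructor
  · intro hstab
    obtain ⟨C, hC, N, hN, hdecay⟩ := exists_norm_prodS_le_mul_half_pow hS hcomp hinv hstab
    obtain ⟨k, hk⟩ := exists_pow_lt_of_lt_one (by positivity : (0 : ℝ) < 1 / (2 * C))
      (by norm_num : (1 / 2 : ℝ) < 1)
    refine ⟨⟨C, hC, fun ℓ _ x hx => (hdecay ℓ x hx).trans ?_⟩, 1 / 2, by norm_num, by norm_num,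
      (k + 1) * N, Nat.mul_pos k.succ_pos hN, fun ℓ hℓ x hx => ?_⟩
    · exact mul_le_of_le_one_right hC.le (pow_le_one₀ (by norm_num) (by norm_num))
    · have hkℓ : k ≤ ℓ / N := (Nat.le_div_iff_mul_le hN).2 ((Nat.mul_le_mul_right N k.le_succ).trans hℓ)
      rw [lt_div_iff₀ (by positivity)] at hk
      calc specRad (prodS S x ℓ) ≤ C * (1 / 2) ^ (ℓ / N) :=
            (specRad_le_norm _).trans (hdecay ℓ x hx)
        _ ≤ C * (1 / 2) ^ k :=
            mul_le_mul_of_nonneg_left (pow_le_pow_of_le_one (by norm_num) (by norm_num) hkℓ) hC.le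
        _ ≤ 1 / 2 := by linarith
  · rintro ⟨⟨β, -, hβ⟩, γ, -, hγ, N, hN, hρ⟩ x hx
    exact tendsto_prodS_zero_of_norm_le_of_specRad_le hinv hγ hN hβ hρ hx

/-- **Lemma 3.1 (Brayton–Tong type criterion under constraints).**
`Λ`-absolute asymptotic stability holds iff (1) all products along signals in `Λ` are
uniformly bounded and (2) the spectral radii of all sufficiently long products along
signals in `Λ` are uniformly bounded away from `1`. -/
theorem abs_asymp_stable_iff_bounded_and_specRad {d : ℕ} (hd : 1 ≤ d) {I : Type*}
    [MetricSpace I] (S : I → Matrix (Fin d) (Fin d) ℂ) (hS : Continuous S)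
    (Λ : Set (ℕ → I)) (hne : Λ.Nonempty) (hcomp : IsCompact Λ) (hinv : ShiftInv Λ) :
    (∀ x ∈ Λ, Filter.Tendsto (fun n : ℕ => prodS S x n) Filter.atTop (nhds 0)) ↔
      ((∃ β : ℝ, 0 < β ∧ ∀ ℓ : ℕ, 1 ≤ ℓ → ∀ x ∈ Λ, opNorm (prodS S x ℓ) ≤ β) ∧
        ∃ γ : ℝ, 0 < γ ∧ γ < 1 ∧ ∃ N : ℕ, 1 ≤ N ∧
          ∀ ℓ : ℕ, N ≤ ℓ → ∀ x ∈ Λ, specRad (prodS S x ℓ) ≤ γ) :=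
  abs_asymp_stable_iff_bounded_and_specRad_general S hS Λ hcomp hinv
end

section
/- Let d ≥ 1, let I be a metric space, let S : I → Matrix d d ℂ be continuous, and let Λ ⊆ Σ_I^+ be a nonempty compact θ_+-invariant subset. Then ρ̂(S|Λ) < 1 if and only if S is Λ-uniformly exponentially stable, i.e. there exist λ ∈ (0,1) and an integer N ≥ 1 such that ‖S_{i_n}···S_{i_1}‖ ≤ λ^n for all i(·) ∈ Λ and all n ≥ N. -/
open Filter Topology MeasureTheory

/-- Joint spectral radius of `S` restricted to `Λ`. -/
noncomputable def jsr {d : ℕ} {I : Type*} (S : I → Matrix (Fin d) (Fin d) ℂ)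
    (Λ : Set (ℕ → I)) : ℝ :=
  Filter.limsup (fun n : ℕ => ⨆ x : Λ, opNorm (prodS S x.1 n) ^ (1 / (n : ℝ))) Filter.atTop

lemma opNorm_nonneg' {d : ℕ} (A : Matrix (Fin d) (Fin d) ℂ) : 0 ≤ opNorm A :=
  norm_nonneg _

lemma opNorm_mul_le' {d : ℕ} (A B : Matrix (Fin d) (Fin d) ℂ) :
    opNorm (A * B) ≤ opNorm A * opNorm B := by
  unfold opNorm; rw [map_mul]; exact norm_mul_le _ _

lemma opNorm_one_le' {d : ℕ} : opNorm (1 : Matrix (Fin d) (Fin d) ℂ) ≤ 1 := by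
  unfold opNorm; rw [map_one]
  exact ContinuousLinearMap.norm_id_le

lemma continuous_opNorm {d : ℕ} : Continuous (opNorm (d := d)) := by
  have h : Continuous (fun A : Matrix (Fin d) (Fin d) ℂ =>
      (Matrix.toEuclideanCLM (𝕜 := ℂ) A :
        EuclideanSpace ℂ (Fin d) →L[ℂ] EuclideanSpace ℂ (Fin d))) :=
    LinearMap.continuous_of_finiteDimensional
      { toFun := fun A => Matrix.toEuclideanCLM (𝕜 := ℂ) A
        map_add' := fun A B => map_add _ A B
        map_smul' := fun c A => map_smul _ c A }
  exact continuous_norm.comp h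

/-- **Lemma 3.2.** `ρ̂(S|Λ) < 1` iff `S` is `Λ`-uniformly exponentially stable. -/
theorem jsr_lt_one_iff_unif_exp_stable {d : ℕ} (hd : 1 ≤ d) {I : Type*} [MetricSpace I]
    (S : I → Matrix (Fin d) (Fin d) ℂ) (hS : Continuous S)
    (Λ : Set (ℕ → I)) (hne : Λ.Nonempty) (hcomp : IsCompact Λ) (hinv : ShiftInv Λ) :
    jsr S Λ < 1 ↔
      ∃ l : ℝ, 0 < l ∧ l < 1 ∧ ∃ N : ℕ, 1 ≤ N ∧
        ∀ x ∈ Λ, ∀ n : ℕ, N ≤ n → opNorm (prodS S x n) ≤ l ^ n := by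
  haveI : Nonempty Λ := hne.to_subtype
  set f : ℕ → ℝ := fun n : ℕ => ⨆ x : Λ, opNorm (prodS S x.1 n) ^ (1 / (n : ℝ)) with hf
  have hjsr : jsr S Λ = Filter.limsup f Filter.atTop := rfl
  -- the compact set of coordinates
  set K : Set I := (fun x : ℕ → I => x 0) '' Λ with hKdef
  have hKcomp : IsCompact K := hcomp.image (continuous_apply 0)
  have hKne : K.Nonempty := hne.image _
  obtain ⟨i₀, hi₀K, hi₀⟩ := hKcomp.exists_isMaxOn hKne
    ((continuous_opNorm.comp hS).continuousOn)
  set M : ℝ := max (opNorm (S i₀)) 1 with hM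
  have hM1 : (1 : ℝ) ≤ M := le_max_right _ _
  have hM0 : (0 : ℝ) < M := lt_of_lt_of_le one_pos hM1
  -- shift invariance gives all coordinates in K
  have hshift : ∀ x ∈ Λ, ∀ k : ℕ, (fun n => x (n + k)) ∈ Λ := by
    intro x hx k
    induction k with
    | zero => simpa using hx
    | succ k ih =>
      have h1 := hinv _ ih
      have h2 : (fun n => x ((n + 1) + k)) = (fun n => x (n + (k + 1))) := by
        funext n; congr 1; omega
      simpa [h2] using h1
  have hcoord : ∀ x ∈ Λ, ∀ k : ℕ, x k ∈ K := by
    intro x hx k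
    refine ⟨fun n => x (n + k), hshift x hx k, ?_⟩
    simp
  have hSle : ∀ i ∈ K, opNorm (S i) ≤ M := fun i hi =>
    le_trans (hi₀ hi) (le_max_left _ _)
  -- uniform bound on products
  have hprod : ∀ x ∈ Λ, ∀ n : ℕ, opNorm (prodS S x n) ≤ M ^ n := by
    intro x hx n
    induction n with
    | zero => simpa [prodS] using opNorm_one_le'
    | succ n ih =>
      calc opNorm (prodS S x (n + 1)) ≤ opNorm (S (x n)) * opNorm (prodS S x n) :=
            opNorm_mul_le' _ _
        _ ≤ M * M ^ n := mul_le_mul (hSle _ (hcoord x hx n)) ih (opNorm_nonneg' _) hM0.le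
        _ = M ^ (n + 1) := by ring
  have hMn : ∀ n : ℕ, 1 ≤ n → (M ^ n) ^ (1 / (n : ℝ)) = M := by
    intro n hn
    have hn0 : (n : ℝ) ≠ 0 := Nat.cast_ne_zero.mpr (by omega)
    rw [← Real.rpow_natCast M n, ← Real.rpow_mul hM0.le, mul_one_div, div_self hn0,
      Real.rpow_one]
  have hbdd : ∀ n : ℕ, BddAbove (Set.range fun x : Λ => opNorm (prodS S x.1 n) ^ (1 / (n : ℝ))) := by
    intro n
    refine ⟨(M ^ n) ^ (1 / (n : ℝ)), ?_⟩
    rintro _ ⟨x, rfl⟩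
    exact Real.rpow_le_rpow (opNorm_nonneg' _) (hprod x.1 x.2 n) (by positivity)
  have hfM : ∀ n : ℕ, f n ≤ M := by
    intro n
    apply ciSup_le
    intro x
    rcases Nat.eq_zero_or_pos n with rfl | hn
    · simpa using hM1
    · calc opNorm (prodS S x.1 n) ^ (1 / (n : ℝ)) ≤ (M ^ n) ^ (1 / (n : ℝ)) :=
          Real.rpow_le_rpow (opNorm_nonneg' _) (hprod x.1 x.2 n) (by positivity)
        _ = M := hMn n hn
  have hf0 : ∀ n : ℕ, 0 ≤ f n :=
    fun n => Real.iSup_nonneg fun x => Real.rpow_nonneg (opNorm_nonneg' _) _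
  have hbound_f : IsBoundedUnder (· ≤ ·) atTop f :=
    Filter.isBoundedUnder_of ⟨M, hfM⟩
  constructor
  · intro h
    set c : ℝ := max (jsr S Λ) 0 with hc
    have hc1 : c < 1 := max_lt h one_pos
    set l : ℝ := (c + 1) / 2 with hl
    have hl0 : 0 < l := by
      have : (0:ℝ) ≤ c := le_max_right _ _
      rw [hl]; linarith
    have hl1 : l < 1 := by rw [hl]; linarith
    have hjl : jsr S Λ < l := by
      have h1 : jsr S Λ ≤ c := le_max_left _ _
      have : c < l := by rw [hl]; linarith
      linarith
    have hev : ∀ᶠ n in atTop, f n < l := by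
      apply eventually_lt_of_limsup_lt _ hbound_f
      rw [← hjsr]; exact hjl
    obtain ⟨N₀, hN₀⟩ := eventually_atTop.mp hev
    refine ⟨l, hl0, hl1, max N₀ 1, le_max_right _ _, ?_⟩
    intro x hx n hn
    have hn1 : 1 ≤ n := le_trans (le_max_right _ _) hn
    have hn0 : (n : ℝ) ≠ 0 := Nat.cast_ne_zero.mpr (by omega)
    have hterm : opNorm (prodS S x n) ^ (1 / (n : ℝ)) ≤ f n :=
      le_ciSup (hbdd n) (⟨x, hx⟩ : Λ)
    have h2 : opNorm (prodS S x n) ^ (1 / (n : ℝ)) ≤ l :=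
      le_of_lt (lt_of_le_of_lt hterm (hN₀ n (le_trans (le_max_left _ _) hn)))
    have ha : (opNorm (prodS S x n) ^ (1 / (n : ℝ))) ^ n = opNorm (prodS S x n) := by
      rw [← Real.rpow_natCast (opNorm (prodS S x n) ^ (1 / (n : ℝ))) n,
        ← Real.rpow_mul (opNorm_nonneg' _), one_div, inv_mul_cancel₀ hn0, Real.rpow_one]
    calc opNorm (prodS S x n) = (opNorm (prodS S x n) ^ (1 / (n : ℝ))) ^ n := ha.symm
      _ ≤ l ^ n := pow_le_pow_left₀ (Real.rpow_nonneg (opNorm_nonneg' _) _) h2 n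
  · rintro ⟨l, hl0, hl1, N, hN1, hb⟩
    have hln : ∀ n : ℕ, 1 ≤ n → (l ^ n) ^ (1 / (n : ℝ)) = l := by
      intro n hn
      have hn0 : (n : ℝ) ≠ 0 := Nat.cast_ne_zero.mpr (by omega)
      rw [← Real.rpow_natCast l n, ← Real.rpow_mul hl0.le, mul_one_div, div_self hn0,
        Real.rpow_one]
    have hflel : ∀ᶠ n in atTop, f n ≤ l := by
      filter_upwards [eventually_ge_atTop (max N 1)] with n hn
      have hn1 : 1 ≤ n := le_trans (le_max_right _ _) hn
      have hnN : N ≤ n := le_trans (le_max_left _ _) hn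
      apply ciSup_le
      intro x
      calc opNorm (prodS S x.1 n) ^ (1 / (n : ℝ)) ≤ (l ^ n) ^ (1 / (n : ℝ)) :=
            Real.rpow_le_rpow (opNorm_nonneg' _) (hb x.1 x.2 n hnN) (by positivity)
        _ = l := hln n hn1
    have hcob : IsCoboundedUnder (· ≤ ·) atTop f :=
      Filter.IsBoundedUnder.isCoboundedUnder_le (Filter.isBoundedUnder_of ⟨0, hf0⟩)
    calc jsr S Λ = Filter.limsup f Filter.atTop := hjsr
      _ ≤ l := Filter.limsup_le_of_le hcob hflel
      _ < 1 := hl1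
end

section
/- (Elsner's reduction lemma.) Let d ≥ 1 and let {S_i}_{i∈I} be a bounded family of matrices in Matrix d d ℂ (indexed by a nonempty set I) with joint spectral radius ρ̂(S) = 1, and suppose the multiplicative semigroup of all finite products S_{i_n}···S_{i_1} (n ≥ 1, i_1,…,i_n ∈ I) is unbounded in norm. Then there exist an invertible matrix P ∈ Matrix d d ℂ and an integer d₁ with 1 ≤ d₁ < d such that for every i ∈ I the matrix P⁻¹ S_i P is block upper triangular with respect to the decomposition d = (d − d₁) + d₁: its lower-left d₁ × (d − d₁) block is zero, i.e. (P⁻¹ S_i P)_{jk} = 0 whenever j > d − d₁ and k ≤ d − d₁. -/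
/-! The vectors whose orbit under the semigroup of products is bounded form a subspace `V`
that every `S i` leaves invariant, so in a basis adapted to `V` all `S i` are block upper
triangular and it remains to see `0 < dim V < d`. The subspace is proper because the semigroup
is unbounded (uniform boundedness principle). If it were zero, every unit vector would be
stretched by a factor `2` by some product; by compactness of the sphere finitely many products,
of length at most `L`, suffice, and iterating them yields products of length at most `m L` and
norm at least `2 ^ m`, forcing `ρ̂(S) ≥ 2 ^ (1 / L) > 1`. -/

open Filter Topology MeasureTheory

open Module

theorem Submodule.exists_basis_fin_adapted {K M : Type*} [Field K] [AddCommGroup M] [Module K M]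
    [FiniteDimensional K M] {d : ℕ} (hd : finrank K M = d) (V : Submodule K M) :
    ∃ b : Basis (Fin d) K M, (∀ k : Fin d, (k : ℕ) < finrank K V → b k ∈ V) ∧
      ∀ v ∈ V, ∀ j : Fin d, finrank K V ≤ j → b.repr v j = 0 := by
  obtain ⟨W, hW⟩ := V.exists_isCompl
  have hrank : finrank K V + finrank K W = d := by
    rw [Submodule.finrank_add_eq_of_isCompl hW, hd]
  subst hrank
  let b : Basis (Fin (finrank K V + finrank K W)) K M :=
    (((finBasis K V).prod (finBasis K W)).map (V.prodEquivOfIsCompl W hW)).reindex finSumFinEquiv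
  refine ⟨b, fun k hk => ?_, fun v hv j hj => ?_⟩
  · obtain ⟨k, rfl⟩ : ∃ k' : Fin (finrank K V), Fin.castAdd _ k' = k := ⟨⟨k, hk⟩, rfl⟩
    simp [b]
  · induction j using Fin.addCases with
    | left j => exact absurd hj (by simp)
    | right j =>
      simp [b, Submodule.projectionOnto_apply_of_mem_right hW.symm hv]

theorem Matrix.exists_isUnit_conj_blockTriangular_of_invariant {K M I : Type*} [Field K]
    [AddCommGroup M] [Module K M] {d : ℕ} (e : Basis (Fin d) K M) (A : I → Matrix (Fin d) (Fin d) K)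
    (V : Submodule K M) (hV : ∀ i, ∀ v ∈ V, Matrix.toLin e e (A i) v ∈ V) :
    ∃ P : Matrix (Fin d) (Fin d) K, IsUnit P ∧ ∀ (i : I) (j k : Fin d),
      finrank K V ≤ j → (k : ℕ) < finrank K V → (P⁻¹ * A i * P) j k = 0 := by
  have := e.finiteDimensional_of_finite
  obtain ⟨b, hb_mem, hb_repr⟩ := V.exists_basis_fin_adapted
    (by rw [finrank_eq_card_basis e, Fintype.card_fin])
  have hinv : (e.toMatrix b)⁻¹ = b.toMatrix e :=
    Matrix.inv_eq_left_inv (Basis.toMatrix_mul_toMatrix_flip b e)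
  refine ⟨e.toMatrix b, ?_, fun i j k hj hk => ?_⟩
  · have := e.invertibleToMatrix b
    exact isUnit_of_invertible _
  rw [hinv, ← LinearMap.toMatrix_toLin e e (A i),
    basis_toMatrix_mul_linearMap_toMatrix_mul_basis_toMatrix, LinearMap.toMatrix_apply]
  exact hb_repr _ (hV i _ (hb_mem k hk)) j hj

section BoundedOrbit

variable {𝕜 E ι : Type*}

def boundedOrbitSubmodule [NormedField 𝕜] [SeminormedAddCommGroup E] [NormedSpace 𝕜 E]
    (T : ι → E →L[𝕜] E) : Submodule 𝕜 E where
  carrier := {v | ∃ C, ∀ i, ‖T i v‖ ≤ C}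
  add_mem' := by
    rintro v w ⟨Cv, hv⟩ ⟨Cw, hw⟩
    refine ⟨Cv + Cw, fun i => ?_⟩
    rw [map_add]
    exact (norm_add_le _ _).trans (add_le_add (hv i) (hw i))
  zero_mem' := ⟨0, fun i => by simp⟩
  smul_mem' := by
    rintro c v ⟨C, hC⟩
    exact ⟨‖c‖ * C, fun i => by
      rw [map_smul, norm_smul]; exact mul_le_mul_of_nonneg_left (hC i) (norm_nonneg c)⟩

variable [NontriviallyNormedField 𝕜] [SeminormedAddCommGroup E] [NormedSpace 𝕜 E]
  {T : ι → E →L[𝕜] E}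

theorem mem_boundedOrbitSubmodule {v : E} :
    v ∈ boundedOrbitSubmodule T ↔ ∃ C, ∀ i, ‖T i v‖ ≤ C :=
  Iff.rfl

theorem apply_mem_boundedOrbitSubmodule {A : E →L[𝕜] E} (hA : ∀ i, ∃ j, T i ∘L A = T j) {v : E}
    (hv : v ∈ boundedOrbitSubmodule T) : A v ∈ boundedOrbitSubmodule T := by
  obtain ⟨C, hC⟩ := hv
  refine ⟨C, fun i => ?_⟩
  obtain ⟨j, hj⟩ := hA i
  simpa [← hj] using hC j

theorem exists_norm_le_of_boundedOrbitSubmodule_eq_top [CompleteSpace E]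
    (h : boundedOrbitSubmodule T = ⊤) : ∃ C, ∀ i, ‖T i‖ ≤ C :=
  banach_steinhaus fun _ => mem_boundedOrbitSubmodule.1 (h ▸ Submodule.mem_top)

end BoundedOrbit

theorem exists_finset_lt_norm_apply_of_boundedOrbitSubmodule_eq_bot {𝕜 E ι : Type*} [RCLike 𝕜]
    [NormedAddCommGroup E] [NormedSpace 𝕜 E] [ProperSpace E] {T : ι → E →L[𝕜] E}
    (h : boundedOrbitSubmodule T = ⊥) (c : ℝ) :
    ∃ s : Finset ι, ∀ v ≠ 0, ∃ i ∈ s, c * ‖v‖ < ‖T i v‖ := by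
  have hcover : Metric.sphere (0 : E) 1 ⊆ ⋃ i, {v | c < ‖T i v‖} := by
    intro u hu
    have hu0 : u ∉ boundedOrbitSubmodule T := by
      rw [h, Submodule.mem_bot]
      exact ne_zero_of_mem_unit_sphere ⟨u, hu⟩
    simp only [mem_boundedOrbitSubmodule, not_exists, not_forall, not_le] at hu0
    exact Set.mem_iUnion.2 (hu0 c)
  obtain ⟨s, hs⟩ := (isCompact_sphere (0 : E) 1).elim_finite_subcover _
    (fun i => isOpen_lt continuous_const (T i).continuous.norm) hcover
  refine ⟨s, fun v hv => ?_⟩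
  have hv' : 0 < ‖v‖ := norm_pos_iff.2 hv
  have hu : ((‖v‖⁻¹ : ℝ) : 𝕜) • v ∈ Metric.sphere (0 : E) 1 := by
    simp [norm_smul, hv'.ne']
  obtain ⟨i, hi, hiu⟩ := Set.mem_iUnion₂.1 (hs hu)
  refine ⟨i, hi, ?_⟩
  have : c < ‖v‖⁻¹ * ‖T i v‖ := by simpa [norm_smul, hv'.le] using hiu
  rwa [inv_mul_eq_div, lt_div_iff₀ hv'] at this

section Products

variable {d : ℕ} {I : Type*} (S : I → Matrix (Fin d) (Fin d) ℂ)

theorem prodS_congr {x y : ℕ → I} {n : ℕ} (h : ∀ k < n, x k = y k) :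
    prodS S x n = prodS S y n := by
  induction n with
  | zero => rfl
  | succ n ih =>
    rw [prodS, prodS, h n n.lt_succ_self, ih fun k hk => h k (hk.trans n.lt_succ_self)]

theorem prodS_concat (x y : ℕ → I) (N n : ℕ) :
    prodS S (fun k => if k < N then x k else y (k - N)) (N + n) = prodS S y n * prodS S x N := by
  induction n with
  | zero => simpa [prodS] using prodS_congr S fun k (hk : k < N) => if_pos hk
  | succ n ih => simp [prodS, ih, mul_assoc]

theorem opNorm_prodS_le {C : ℝ} (hC : 0 ≤ C) (hS : ∀ i, opNorm (S i) ≤ C) (x : ℕ → I) (n : ℕ) :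
    opNorm (prodS S x n) ≤ C ^ n := by
  induction n with
  | zero =>
    simp only [opNorm, prodS, map_one, pow_zero]
    exact ContinuousLinearMap.norm_id_le
  | succ n ih =>
    calc opNorm (prodS S x (n + 1))
        ≤ opNorm (S (x n)) * opNorm (prodS S x n) := by
          simpa only [opNorm, prodS, map_mul] using norm_mul_le _ _
      _ ≤ C ^ (n + 1) := by
          rw [pow_succ']; exact mul_le_mul (hS _) ih (norm_nonneg _) hC

noncomputable def prodSCLM (p : ℕ × (ℕ → I)) :
    EuclideanSpace ℂ (Fin d) →L[ℂ] EuclideanSpace ℂ (Fin d) :=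
  Matrix.toEuclideanCLM (𝕜 := ℂ) (prodS S p.2 p.1)

theorem prodSCLM_zero (x : ℕ → I) : prodSCLM S (0, x) = 1 := by
  simp [prodSCLM, prodS]

theorem prodSCLM_concat (x y : ℕ → I) (N n : ℕ) :
    prodSCLM S (N + n, fun k => if k < N then x k else y (k - N)) =
      prodSCLM S (n, y) * prodSCLM S (N, x) := by
  simp [prodSCLM, prodS_concat]

theorem prodSCLM_comp_toEuclideanCLM (p : ℕ × (ℕ → I)) (i : I) :
    ∃ q, prodSCLM S p ∘L Matrix.toEuclideanCLM (𝕜 := ℂ) (S i) = prodSCLM S q := by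
  refine ⟨(1 + p.1, fun k => if k < 1 then i else p.2 (k - 1)), ?_⟩
  rw [prodSCLM_concat S (fun _ => i)]
  simp [prodSCLM, prodS, ContinuousLinearMap.mul_def]

end Products

section JointSpectralRadius

variable {d : ℕ} {I : Type*} (S : I → Matrix (Fin d) (Fin d) ℂ)

noncomputable def jointSpectralRadius : ℝ :=
  limsup (fun n : ℕ => ⨆ x : ℕ → I, opNorm (prodS S x n) ^ (1 / (n : ℝ))) atTop

theorem opNorm_prodS_rpow_le {C : ℝ} (hC : 1 ≤ C) (hS : ∀ i, opNorm (S i) ≤ C) (x : ℕ → I)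
    (n : ℕ) : opNorm (prodS S x n) ^ (1 / (n : ℝ)) ≤ C := by
  rcases eq_or_ne n 0 with rfl | hn
  · simpa using hC
  calc opNorm (prodS S x n) ^ (1 / (n : ℝ)) ≤ (C ^ n) ^ (1 / (n : ℝ)) :=
        Real.rpow_le_rpow (norm_nonneg _) (opNorm_prodS_le S (by linarith) hS x n) (by positivity)
    _ = C := by rw [one_div, Real.pow_rpow_inv_natCast (by linarith) hn]

theorem le_jointSpectralRadius (hbdd : ∃ C, ∀ i, opNorm (S i) ≤ C) {c : ℝ} (hc : 0 ≤ c)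
    (h : ∀ m, ∃ n ≥ m, ∃ x, c ^ n ≤ opNorm (prodS S x n)) : c ≤ jointSpectralRadius S := by
  obtain ⟨C, hC⟩ := hbdd
  have hbound (n : ℕ) (x : ℕ → I) : opNorm (prodS S x n) ^ (1 / (n : ℝ)) ≤ max C 1 :=
    opNorm_prodS_rpow_le S (le_max_right C 1) (fun i => (hC i).trans (le_max_left C 1)) x n
  refine le_limsup_of_frequently_le (frequently_atTop.2 fun m => ?_)
    (isBoundedUnder_of ⟨max C 1, fun n => Real.iSup_le (hbound n) (by positivity)⟩)
  obtain ⟨n, hn, x, hx⟩ := h (max m 1)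
  refine ⟨n, le_of_max_le_left hn, le_ciSup_of_le ⟨max C 1, ?_⟩ x ?_⟩
  · rintro _ ⟨y, rfl⟩; exact hbound n y
  · calc c = (c ^ n) ^ (1 / (n : ℝ)) := by
          rw [one_div, Real.pow_rpow_inv_natCast hc (by omega)]
      _ ≤ _ := Real.rpow_le_rpow (by positivity) hx (by positivity)

end JointSpectralRadius

section Growth

variable {d : ℕ} {I : Type*} (S : I → Matrix (Fin d) (Fin d) ℂ)

theorem exists_prodSCLM_growth [Nonempty I] {s : Finset (ℕ × (ℕ → I))}
    (hs : ∀ w ≠ 0, ∃ p ∈ s, 2 * ‖w‖ < ‖prodSCLM S p w‖) {v : EuclideanSpace ℂ (Fin d)}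
    (hv : v ≠ 0) (m : ℕ) :
    ∃ p : ℕ × (ℕ → I), m ≤ p.1 ∧ p.1 ≤ m * s.sup Prod.fst ∧
      2 ^ m * ‖v‖ ≤ ‖prodSCLM S p v‖ := by
  induction m with
  | zero => exact ⟨(0, fun _ => Classical.arbitrary I), le_rfl, by simp, by simp [prodSCLM_zero]⟩
  | succ m ih =>
    obtain ⟨⟨N, x⟩, hmN, hNL, hgrow⟩ := ih
    have hw : prodSCLM S (N, x) v ≠ 0 := by
      rw [← norm_pos_iff]
      exact (mul_pos (by positivity) (norm_pos_iff.2 hv)).trans_le hgrow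
    obtain ⟨⟨n, y⟩, hs_mem, hexp⟩ := hs _ hw
    have hn : n ≠ 0 := by
      rintro rfl
      simp only [prodSCLM_zero, one_apply_eq_self] at hexp
      linarith [norm_nonneg (prodSCLM S (N, x) v)]
    have hnL : n ≤ s.sup Prod.fst := Finset.le_sup (f := Prod.fst) hs_mem
    refine ⟨(N + n, fun k => if k < N then x k else y (k - N)), by dsimp; omega,
      by dsimp; rw [add_mul, one_mul]; omega, ?_⟩
    rw [prodSCLM_concat, mul_apply_eq_comp, pow_succ', mul_assoc]
    exact (mul_le_mul_of_nonneg_left hgrow (by norm_num)).trans hexp.le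

theorem one_lt_jointSpectralRadius_of_boundedOrbitSubmodule_eq_bot [Nonempty I]
    (hbdd : ∃ C, ∀ i, opNorm (S i) ≤ C) (hV : boundedOrbitSubmodule (prodSCLM S) = ⊥)
    {v : EuclideanSpace ℂ (Fin d)} (hv : v ≠ 0) : 1 < jointSpectralRadius S := by
  obtain ⟨s, hs⟩ := exists_finset_lt_norm_apply_of_boundedOrbitSubmodule_eq_bot hV 2
  set L := s.sup Prod.fst
  have hgrowth := exists_prodSCLM_growth S hs hv
  have hL : 0 < L := by
    obtain ⟨p, h1, hL, -⟩ := hgrowth 1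
    omega
  refine (Real.one_lt_rpow one_lt_two (by positivity : 0 < (L : ℝ)⁻¹)).trans_le
    (le_jointSpectralRadius S hbdd (by positivity) fun m => ?_)
  obtain ⟨⟨N, x⟩, hmN, hNL, hgrow⟩ := hgrowth m
  refine ⟨N, hmN, x, ?_⟩
  have hNL' : (N : ℝ) / L ≤ m := by
    rw [div_le_iff₀ (by exact_mod_cast hL)]; exact_mod_cast hNL
  calc ((2 : ℝ) ^ (L : ℝ)⁻¹) ^ N = 2 ^ ((N : ℝ) / L) := by
        rw [← Real.rpow_natCast, ← Real.rpow_mul zero_le_two, inv_mul_eq_div]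
    _ ≤ 2 ^ m := by
        rw [← Real.rpow_natCast 2 m]; exact Real.rpow_le_rpow_of_exponent_le one_le_two hNL'
    _ ≤ opNorm (prodS S x N) :=
        le_of_mul_le_mul_right (hgrow.trans ((prodSCLM S (N, x)).le_opNorm v))
          (norm_pos_iff.2 hv)

end Growth

theorem elsner_reduction_general {d : ℕ} {I : Type*} [Nonempty I]
    (S : I → Matrix (Fin d) (Fin d) ℂ)
    (hbdd : ∃ C : ℝ, ∀ i : I, opNorm (S i) ≤ C)
    (hjsr : Filter.limsup
        (fun n : ℕ => ⨆ x : ℕ → I, opNorm (prodS S x n) ^ (1 / (n : ℝ)))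
        Filter.atTop = 1)
    (hunbd : ¬ ∃ B : ℝ, ∀ n : ℕ, 1 ≤ n → ∀ x : ℕ → I, opNorm (prodS S x n) ≤ B) :
    ∃ P : Matrix (Fin d) (Fin d) ℂ, IsUnit P ∧
      ∃ d₁ : ℕ, 1 ≤ d₁ ∧ d₁ < d ∧
        ∀ (i : I) (j k : Fin d), d - d₁ ≤ (j : ℕ) → (k : ℕ) < d - d₁ →
          (P⁻¹ * S i * P) j k = 0 := by
  set V := boundedOrbitSubmodule (prodSCLM S)
  have hV_top : V ≠ ⊤ := fun h => by
    obtain ⟨B, hB⟩ := exists_norm_le_of_boundedOrbitSubmodule_eq_top h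
    exact hunbd ⟨B, fun n _ x => hB (n, x)⟩
  have hV_bot : V ≠ ⊥ := fun h => by
    obtain ⟨v, -, hv⟩ := SetLike.exists_of_lt hV_top.lt_top
    have hv0 : v ≠ 0 := by rwa [h, Submodule.mem_bot] at hv
    exact (one_lt_jointSpectralRadius_of_boundedOrbitSubmodule_eq_bot S hbdd h hv0).ne' hjsr
  obtain ⟨P, hP, hblock⟩ := Matrix.exists_isUnit_conj_blockTriangular_of_invariant
    (EuclideanSpace.basisFun (Fin d) ℂ).toBasis S V
    fun i _ hv => apply_mem_boundedOrbitSubmodule (prodSCLM_comp_toEuclideanCLM S · i) hv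
  have hrank_lt : finrank ℂ V < d := by simpa using Submodule.finrank_lt hV_top
  have hrank_pos : 0 < finrank ℂ V :=
    Nat.pos_of_ne_zero fun h => hV_bot (Submodule.finrank_eq_zero.1 h)
  exact ⟨P, hP, d - finrank ℂ V, by omega, by omega,
    fun i j k hj hk => hblock i j k (by omega) (by omega)⟩

/-- **Elsner's reduction lemma.** If a bounded family of matrices has joint spectral
radius `1` but its multiplicative semigroup of products is unbounded, then the family is
simultaneously similar to a common block upper-triangular form, with nontrivial diagonal
blocks of sizes `d - d₁` and `d₁`.  (Products of length `n` over words in `I^n` are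
expressed as `prodS S x n` over signals `x : ℕ → I`.) -/
theorem elsner_reduction {d : ℕ} (hd : 1 ≤ d) {I : Type*} [Nonempty I]
    (S : I → Matrix (Fin d) (Fin d) ℂ)
    (hbdd : ∃ C : ℝ, ∀ i : I, opNorm (S i) ≤ C)
    (hjsr : Filter.limsup
        (fun n : ℕ => ⨆ x : ℕ → I, opNorm (prodS S x n) ^ (1 / (n : ℝ)))
        Filter.atTop = 1)
    (hunbd : ¬ ∃ B : ℝ, ∀ n : ℕ, 1 ≤ n → ∀ x : ℕ → I, opNorm (prodS S x n) ≤ B) :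
    ∃ P : Matrix (Fin d) (Fin d) ℂ, IsUnit P ∧
      ∃ d₁ : ℕ, 1 ≤ d₁ ∧ d₁ < d ∧
        ∀ (i : I) (j k : Fin d), d - d₁ ≤ (j : ℕ) → (k : ℕ) < d - d₁ →
          (P⁻¹ * S i * P) j k = 0 :=
  elsner_reduction_general S hbdd hjsr hunbd
end
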